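/- Let E_1,…,E_K be independent random variables on a probability space, with E_k exponentially distributed with rate y_k for each k. Then for every k ∈ {1,…,K}, the probability that there exists an item i with u_{k,i} > 0 such that (y_k/u_{k,i})·E_k ≤ (y_{k'}/u_{k',i})·E_{k'} for every k' ≠ k with u_{k',i} > 0, is at most (1 + ln q)·y_k. (This is the guarantee that the dilated-opening-times rounding scheme uses each fulfillment center k with probability at most (1 + ln q)·y_k.) -/

import Mathlib

/-!
Either `E k ≤ log q`, which has probability `1 - exp (-y k log q) ≤ y k log q`, or `k` wins some
item `i` with `u k i > 0` while `E k > log q`. For a fixed item, `k` wins iff every competitor `j`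
has `E j ≥ α j * E k` with `α j = (y k / u k i) / (y j / u j i)`; integrating the independent tails
`exp (-y j α j t)` against the law of `E k` over `t > τ` gives
`y k / (y k + β) * exp (-(y k + β) τ)` with `β = ∑ j, y j α j`, and `y k + β = y k / u k i` because
the column `u · i` sums to one. This is `u k i * exp (-(y k / u k i) τ) ≤ y k / q` at `τ = log q`,
and a union bound over the `q` items gives `y k`.
-/

open MeasureTheory ProbabilityTheory Real Set

namespace ProbabilityTheory

lemma expMeasure_eq_withDensity (r : ℝ) :
    expMeasure r = volume.withDensity (exponentialPDF r) := rfl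

lemma measurable_exponentialPDF (r : ℝ) : Measurable (exponentialPDF r) :=
  (measurable_exponentialPDFReal r).ennreal_ofReal

lemma expMeasure_Iic {r x : ℝ} (hr : 0 < r) (hx : 0 ≤ x) :
    expMeasure r (Iic x) = ENNReal.ofReal (1 - exp (-(r * x))) := by
  rw [expMeasure_eq_withDensity, withDensity_apply _ measurableSet_Iic,
    lintegral_exponentialPDF_eq_antiDeriv hr x, if_pos hx]

lemma expMeasure_Iic_le {r x : ℝ} (hr : 0 < r) (hx : 0 ≤ x) :
    expMeasure r (Iic x) ≤ ENNReal.ofReal (r * x) := by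
  rw [expMeasure_Iic hr hx]
  exact ENNReal.ofReal_le_ofReal (by linarith [add_one_le_exp (-(r * x))])

lemma expMeasure_Ioi {r x : ℝ} (hr : 0 < r) (hx : 0 ≤ x) :
    expMeasure r (Ioi x) = ENNReal.ofReal (exp (-(r * x))) := by
  have := isProbabilityMeasure_expMeasure hr
  rw [← compl_Iic, prob_compl_eq_one_sub measurableSet_Iic, expMeasure_Iic hr hx,
    ← ENNReal.ofReal_one, ← ENNReal.ofReal_sub _ (sub_nonneg.2 (exp_le_one_iff.2 (by nlinarith)))]
  norm_num

lemma expMeasure_Ici {r x : ℝ} (hr : 0 < r) (hx : 0 ≤ x) :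
    expMeasure r (Ici x) = ENNReal.ofReal (exp (-(r * x))) := by
  have h0 : expMeasure r {x} = 0 :=
    withDensity_absolutelyContinuous _ _ (Real.volume_singleton)
  rw [← measure_congr (Ioi_ae_eq_Ici' h0), expMeasure_Ioi hr hx]

lemma setLIntegral_Ioi_exponentialPDF_mul_exp {r β τ : ℝ} (hr : 0 < r) (hβ : 0 ≤ β)
    (hτ : 0 ≤ τ) :
    ∫⁻ t in Ioi τ, exponentialPDF r t * ENNReal.ofReal (exp (-(β * t)))
      = ENNReal.ofReal (r / (r + β) * exp (-((r + β) * τ))) := by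
  have hrβ : 0 < r + β := by linarith
  have hpt : ∀ t ∈ Ioi τ, exponentialPDF r t * ENNReal.ofReal (exp (-(β * t)))
      = ENNReal.ofReal (r / (r + β)) * exponentialPDF (r + β) t := by
    intro t ht
    have ht0 : 0 ≤ t := hτ.trans (le_of_lt ht)
    rw [exponentialPDF_of_nonneg ht0, exponentialPDF_of_nonneg ht0,
      ← ENNReal.ofReal_mul (by positivity), ← ENNReal.ofReal_mul (by positivity)]
    congr 1
    rw [show -((r + β) * t) = -(r * t) + -(β * t) by ring, exp_add]
    field_simp
  rw [setLIntegral_congr_fun measurableSet_Ioi hpt,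
    lintegral_const_mul _ (measurable_exponentialPDF _), ← withDensity_apply _ measurableSet_Ioi,
    ← expMeasure_eq_withDensity, expMeasure_Ioi hrβ hτ,
    ← ENNReal.ofReal_mul (by positivity)]

section Race

variable {Ω ι : Type*} [MeasurableSpace Ω] {μ : Measure Ω} {E : ι → Ω → ℝ} {r : ι → ℝ}

lemma measure_biInter_preimage_Ici_of_iIndepFun (hmeas : ∀ j, Measurable (E j))
    (hindep : iIndepFun E μ) (hlaw : ∀ j, μ.map (E j) = expMeasure (r j)) (hr : ∀ j, 0 < r j)
    (T : Finset ι) {a : ι → ℝ} (ha : ∀ j ∈ T, 0 ≤ a j) :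
    μ (⋂ j ∈ T, E j ⁻¹' Ici (a j)) = ENNReal.ofReal (exp (-∑ j ∈ T, r j * a j)) := by
  have htail : ∀ j ∈ T, μ (E j ⁻¹' Ici (a j)) = ENNReal.ofReal (exp (-(r j * a j))) := by
    intro j hj
    rw [← Measure.map_apply (hmeas j) measurableSet_Ici, hlaw j, expMeasure_Ici (hr j) (ha j hj)]
  rw [hindep.measure_inter_preimage_eq_mul T (fun j _ => measurableSet_Ici),
    Finset.prod_congr rfl htail, ← ENNReal.ofReal_prod_of_nonneg fun j _ => (exp_nonneg _),
    ← exp_sum, Finset.sum_neg_distrib]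

lemma map_prodMk_eq_expMeasure_prod_of_iIndepFun [IsProbabilityMeasure μ]
    (hmeas : ∀ j, Measurable (E j)) (hindep : iIndepFun E μ)
    {k : ι} (hlaw : μ.map (E k) = expMeasure (r k)) {T : Finset ι} (hkT : k ∉ T) :
    μ.map (fun ω => (E k ω, fun j : T => E j ω))
      = (expMeasure (r k)).prod (μ.map fun ω (j : T) => E j ω) := by
  have hind : IndepFun (E k) (fun ω (j : T) => E j ω) μ :=
    (hindep.indepFun_finset {k} T (Finset.disjoint_singleton_left.mpr hkT) hmeas).comp
      (measurable_pi_apply (⟨k, Finset.mem_singleton_self k⟩ : ({k} : Finset ι))) measurable_id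
  rw [← hlaw]
  exact (indepFun_iff_map_prod_eq_prod_map_map (hmeas k).aemeasurable
    (measurable_pi_lambda (fun ω (j : T) => E j ω) fun j => hmeas j).aemeasurable).mp hind

lemma measure_lt_and_forall_mul_le_of_iIndepFun [IsProbabilityMeasure μ]
    (hmeas : ∀ j, Measurable (E j)) (hindep : iIndepFun E μ)
    (hlaw : ∀ j, μ.map (E j) = expMeasure (r j)) (hr : ∀ j, 0 < r j)
    {k : ι} {T : Finset ι} (hkT : k ∉ T) {α : ι → ℝ} (hα : ∀ j ∈ T, 0 ≤ α j)
    {τ : ℝ} (hτ : 0 ≤ τ) :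
    μ {ω | τ < E k ω ∧ ∀ j ∈ T, α j * E k ω ≤ E j ω}
      = ENNReal.ofReal (r k / (r k + ∑ j ∈ T, r j * α j)
          * exp (-((r k + ∑ j ∈ T, r j * α j) * τ))) := by
  set β := ∑ j ∈ T, r j * α j
  have hβ : 0 ≤ β := Finset.sum_nonneg fun j hj => mul_nonneg (hr j).le (hα j hj)
  set F : Ω → T → ℝ := fun ω j => E j ω
  have hF : Measurable F := measurable_pi_lambda _ fun j => hmeas j
  set S : Set (ℝ × (T → ℝ)) := {p | τ < p.1 ∧ ∀ j : T, α j * p.1 ≤ p.2 j}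
  have hS : MeasurableSet S :=
    (measurableSet_lt measurable_const measurable_fst).inter <| measurableSet_setOfPred.2 <|
      .forall fun j => measurableSet_setOfPred.1 <|
        measurableSet_le (measurable_fst.const_mul _) ((measurable_pi_apply j).comp measurable_snd)
  -- given `E k = t > τ`, each `E j` must exceed `α j * t`, independently
  have hslice : ∀ t, μ.map F (Prod.mk t ⁻¹' S)
      = (Ioi τ).indicator (fun t => ENNReal.ofReal (exp (-(β * t)))) t := by
    intro t
    rw [Measure.map_apply hF (measurable_prodMk_left hS)]
    by_cases ht : τ < t
    · have hpre : F ⁻¹' (Prod.mk t ⁻¹' S) = ⋂ j ∈ T, E j ⁻¹' Ici (α j * t) := by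
        ext ω; simp [F, S, ht]
      rw [hpre, indicator_of_mem (mem_Ioi.2 ht), measure_biInter_preimage_Ici_of_iIndepFun hmeas
        hindep hlaw hr T fun j hj => mul_nonneg (hα j hj) (hτ.trans ht.le)]
      simp only [β, Finset.sum_mul, mul_assoc]
    · have hpre : F ⁻¹' (Prod.mk t ⁻¹' S) = ∅ := by
        ext ω; simp [F, S, ht]
      rw [hpre, measure_empty, indicator_of_notMem (mt mem_Ioi.1 ht)]
  calc μ {ω | τ < E k ω ∧ ∀ j ∈ T, α j * E k ω ≤ E j ω}
      = μ.map (fun ω => (E k ω, F ω)) S := by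
        rw [Measure.map_apply ((hmeas k).prodMk hF) hS]
        congr 1; ext ω; simp [S, F]
    _ = ∫⁻ t, μ.map F (Prod.mk t ⁻¹' S) ∂expMeasure (r k) := by
        rw [map_prodMk_eq_expMeasure_prod_of_iIndepFun hmeas hindep (hlaw k) hkT,
          Measure.prod_apply hS]
    _ = ∫⁻ t in Ioi τ, exponentialPDF (r k) t * ENNReal.ofReal (exp (-(β * t))) := by
        rw [lintegral_congr hslice, lintegral_indicator measurableSet_Ioi,
          expMeasure_eq_withDensity, restrict_withDensity measurableSet_Ioi,
          lintegral_withDensity_eq_lintegral_mul _ (measurable_exponentialPDF _) (by fun_prop)]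
        rfl
    _ = _ := setLIntegral_Ioi_exponentialPDF_mul_exp (hr k) hβ hτ

lemma measure_lt_and_dilated_first_eq [IsProbabilityMeasure μ] [Fintype ι]
    (hmeas : ∀ j, Measurable (E j)) (hindep : iIndepFun E μ)
    (hlaw : ∀ j, μ.map (E j) = expMeasure (r j)) (hr : ∀ j, 0 < r j)
    {w : ι → ℝ} (hw : ∀ j, 0 ≤ w j) (hw_sum : ∑ j, w j = 1) {k : ι} (hwk : 0 < w k)
    {τ : ℝ} (hτ : 0 ≤ τ) :
    μ {ω | τ < E k ω ∧ ∀ j, j ≠ k → 0 < w j → (r k / w k) * E k ω ≤ (r j / w j) * E j ω}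
      = ENNReal.ofReal (w k * exp (-(r k / w k * τ))) := by
  classical
  set T := Finset.univ.filter fun j => j ≠ k ∧ 0 < w j
  have hT : ∀ j, j ∈ T ↔ j ≠ k ∧ 0 < w j := by simp [T]
  set α : ι → ℝ := fun j => (r k / w k) / (r j / w j)
  have hα : ∀ j ∈ T, 0 ≤ α j := fun j _ =>
    div_nonneg (div_pos (hr k) hwk).le (div_nonneg (hr j).le (hw j))
  have hwT : ∑ j ∈ T, w j = 1 - w k := by
    rw [← hw_sum, ← Finset.add_sum_erase _ _ (Finset.mem_univ k), add_sub_cancel_left]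
    refine Finset.sum_subset (fun j hj => Finset.mem_erase.2 ⟨((hT j).1 hj).1, Finset.mem_univ j⟩)
      fun j hj hjT => ?_
    have hjk := (Finset.mem_erase.1 hj).1
    exact le_antisymm (not_lt.1 fun hwj => hjT ((hT j).2 ⟨hjk, hwj⟩)) (hw j)
  have hrate : r k + ∑ j ∈ T, r j * α j = r k / w k := by
    have hterm : ∀ j ∈ T, r j * α j = r k / w k * w j := fun j hj => by
      have := ((hT j).1 hj).2; have := (hr j).ne'; simp only [α]; field_simp
    rw [Finset.sum_congr rfl hterm, ← Finset.mul_sum, hwT]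
    field_simp; ring
  have hset : {ω | τ < E k ω ∧ ∀ j, j ≠ k → 0 < w j → (r k / w k) * E k ω ≤ (r j / w j) * E j ω}
      = {ω | τ < E k ω ∧ ∀ j ∈ T, α j * E k ω ≤ E j ω} := by
    ext ω
    refine and_congr_right fun _ => forall_congr' fun j => ?_
    rw [hT, and_imp]
    refine imp_congr_right fun _ => imp_congr_right fun hwj => ?_
    rw [div_mul_eq_mul_div (r k / w k) (r j / w j), div_le_iff₀ (div_pos (hr j) hwj),
      mul_comm (E j ω)]
  rw [hset, measure_lt_and_forall_mul_le_of_iIndepFun hmeas hindep hlaw hr (by simp [hT]) hα hτ,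
    hrate, div_div_cancel₀ (hr k).ne']

lemma measure_pos_and_lt_and_dilated_first_le [IsProbabilityMeasure μ] [Fintype ι]
    (hmeas : ∀ j, Measurable (E j)) (hindep : iIndepFun E μ)
    (hlaw : ∀ j, μ.map (E j) = expMeasure (r j)) (hr : ∀ j, 0 < r j)
    {w : ι → ℝ} (hw : ∀ j, 0 ≤ w j) (hw_sum : ∑ j, w j = 1) {k : ι}
    (hwr : w k ≤ r k) {τ : ℝ} (hτ : 0 ≤ τ) :
    μ {ω | 0 < w k ∧ τ < E k ω ∧
        ∀ j, j ≠ k → 0 < w j → (r k / w k) * E k ω ≤ (r j / w j) * E j ω}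
      ≤ ENNReal.ofReal (r k * exp (-τ)) := by
  by_cases hwk : 0 < w k
  · simp only [hwk, true_and]
    rw [measure_lt_and_dilated_first_eq hmeas hindep hlaw hr hw hw_sum hwk hτ]
    have h1 : 1 ≤ r k / w k := (one_le_div hwk).2 hwr
    exact ENNReal.ofReal_le_ofReal
      (mul_le_mul hwr (exp_le_exp.2 (by nlinarith)) (exp_nonneg _) (hr k).le)
  · simp [hwk]

end Race

end ProbabilityTheory

theorem stmt_2_general
    {Ω : Type*} [MeasurableSpace Ω] {μ : Measure Ω} [IsProbabilityMeasure μ]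
    (q K : ℕ) (hq : 0 < q)
    (u : Fin K → Fin q → ℝ) (hu_nonneg : ∀ k i, 0 ≤ u k i)
    (hu_sum : ∀ i, ∑ k, u k i = 1)
    (y : Fin K → ℝ)
    (hy : ∀ k, y k = Finset.univ.sup' (Finset.univ_nonempty_iff.mpr ⟨⟨0, hq⟩⟩) (u k))
    (hy_pos : ∀ k, 0 < y k)
    (E : Fin K → Ω → ℝ) (hmeas : ∀ k, Measurable (E k))
    (hindep : iIndepFun E μ)
    (hlaw : ∀ k, μ.map (E k) = expMeasure (y k))
    (k : Fin K) :
    μ {ω | ∃ i, 0 < u k i ∧ ∀ k', k' ≠ k → 0 < u k' i →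
        (y k / u k i) * E k ω ≤ (y k' / u k' i) * E k' ω}
      ≤ ENNReal.ofReal ((1 + Real.log q) * y k) := by
  set τ := Real.log q
  have hq' : (0 : ℝ) < q := by exact_mod_cast hq
  have hτ : 0 ≤ τ := Real.log_nonneg (by exact_mod_cast hq)
  have hexp : exp (-τ) = (q : ℝ)⁻¹ := by rw [exp_neg, exp_log hq']
  let B : Fin q → Set Ω := fun i => {ω | 0 < u k i ∧ τ < E k ω ∧
    ∀ k', k' ≠ k → 0 < u k' i → (y k / u k i) * E k ω ≤ (y k' / u k' i) * E k' ω}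
  calc μ {ω | ∃ i, 0 < u k i ∧ ∀ k', k' ≠ k → 0 < u k' i →
        (y k / u k i) * E k ω ≤ (y k' / u k' i) * E k' ω}
      ≤ μ (E k ⁻¹' Iic τ ∪ ⋃ i, B i) := by
        refine measure_mono fun ω ⟨i, hui, hfirst⟩ => ?_
        by_cases hE : E k ω ≤ τ
        · exact Or.inl hE
        · exact Or.inr (mem_iUnion.2 ⟨i, hui, lt_of_not_ge hE, hfirst⟩)
    _ ≤ μ (E k ⁻¹' Iic τ) + ∑ i, μ (B i) :=
        (measure_union_le _ _).trans (add_le_add le_rfl (measure_iUnion_fintype_le _ _))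
    _ ≤ ENNReal.ofReal (y k * τ) + ∑ _i : Fin q, ENNReal.ofReal (y k * exp (-τ)) := by
        gcongr with i
        · rw [← Measure.map_apply (hmeas k) measurableSet_Iic, hlaw k]
          exact expMeasure_Iic_le (hy_pos k) hτ
        · exact measure_pos_and_lt_and_dilated_first_le hmeas hindep hlaw hy_pos
            (fun j => hu_nonneg j i) (hu_sum i) (hy k ▸ Finset.le_sup' (u k) (Finset.mem_univ i)) hτ
    _ = ENNReal.ofReal ((1 + τ) * y k) := by
        rw [Finset.sum_const, Finset.card_univ, Fintype.card_fin, ← ENNReal.ofReal_nsmul,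
          nsmul_eq_mul, hexp, mul_left_comm, mul_inv_cancel₀ hq'.ne', mul_one,
          ← ENNReal.ofReal_add (mul_nonneg (hy_pos k).le hτ) (hy_pos k).le]
        ring_nf

/-- the dilated-opening-times rounding scheme uses each FC `k`
(i.e. some item sees `k` open weakly first) with probability at most `(1 + ln q)·y k`. -/
theorem stmt_2
    {Ω : Type*} [MeasurableSpace Ω] {μ : Measure Ω} [IsProbabilityMeasure μ]
    (q K : ℕ) (hq : 0 < q) (hK : 0 < K)
    (u : Fin K → Fin q → ℝ) (hu_nonneg : ∀ k i, 0 ≤ u k i)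
    (hu_sum : ∀ i, ∑ k, u k i = 1)
    (y : Fin K → ℝ)
    (hy : ∀ k, y k = Finset.univ.sup' (Finset.univ_nonempty_iff.mpr ⟨⟨0, hq⟩⟩) (u k))
    (hy_pos : ∀ k, 0 < y k)
    (E : Fin K → Ω → ℝ) (hmeas : ∀ k, Measurable (E k))
    (hindep : iIndepFun E μ)
    (hlaw : ∀ k, μ.map (E k) = expMeasure (y k))
    (k : Fin K) :
    μ {ω | ∃ i, 0 < u k i ∧ ∀ k', k' ≠ k → 0 < u k' i →
        (y k / u k i) * E k ω ≤ (y k' / u k' i) * E k' ω}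
      ≤ ENNReal.ofReal ((1 + Real.log q) * y k) :=
  stmt_2_general q K hq u hu_nonneg hu_sum y hy hy_pos E hmeas hindep hlaw k
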